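/- Let p be a positive rational with √p irrational, and let x₁ = a₁ + b₁√p, …, xₙ = aₙ + bₙ√p (n ≥ 2) with all aᵢ, bᵢ ∈ ℚ and all xᵢ > 0. Suppose aᵢ − bᵢ√p > 0 for all i. Then for every z = e + f√p > 0 with e, f ∈ ℚ, e > 0 and |f|/e < max_{1 ≤ i ≤ n} |bᵢ|/aᵢ, the rectangle of aspect ratio z admits a diverse tiling by rectangles with aspect ratios x₁, …, xₙ. -/

import Mathlib

/-!
Let `j` attain the maximum of `|bᵢ| / aᵢ`. Then `|f| aⱼ < |bⱼ| e` says precisely that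
`e + f√p = u xⱼ + t (aⱼ - bⱼ√p)` has a solution with `u, t` positive rationals, and as the
inequality is strict it survives first giving every `xᵢ` a small weight `ε`. So
`z = ∑ qᵢ xᵢ + t (aⱼ - bⱼ√p)` with all `qᵢ, t ∈ ℚ₊`, and `aⱼ - bⱼ√p = N / xⱼ` where
`N = aⱼ² - bⱼ² p` is a positive rational. A rectangle of aspect ratio `q x` with `q ∈ ℚ₊` is a
grid of `x`-tiles, so stacking one strip for each summand gives a diverse tiling of `z`.
-/

/-- A tiling of the rectangle `[0,1] × [0,r]` by finitely many closed
axis-parallel rectangles with positive side lengths, covering the rectangle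
and having pairwise disjoint interiors. -/
structure RectTiling (r : ℝ) where
  m : ℕ
  px : Fin m → ℝ
  py : Fin m → ℝ
  w : Fin m → ℝ
  h : Fin m → ℝ
  w_pos : ∀ k, 0 < w k
  h_pos : ∀ k, 0 < h k
  cover : (Set.Icc (0:ℝ) 1 ×ˢ Set.Icc (0:ℝ) r) =
      ⋃ k, Set.Icc (px k) (px k + w k) ×ˢ Set.Icc (py k) (py k + h k)
  disj : ∀ k l, k ≠ l →
      Disjoint ((Set.Ioo (px k) (px k + w k)) ×ˢ (Set.Ioo (py k) (py k + h k)))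
               ((Set.Ioo (px l) (px l + w l)) ×ˢ (Set.Ioo (py l) (py l + h l)))

/-- Tile `k` of the tiling `T` has aspect ratio `x` (in one of the two orientations). -/
def RectTiling.ratioOK {r : ℝ} (T : RectTiling r) (k : Fin T.m) (x : ℝ) : Prop :=
  T.h k / T.w k = x ∨ T.w k / T.h k = x

/-- The rectangle of aspect ratio `r` is tileable by rectangles with aspect
ratios among `X`. -/
def Tileable (r : ℝ) {n : ℕ} (X : Fin n → ℝ) : Prop :=
  ∃ T : RectTiling r, ∀ k, ∃ i, T.ratioOK k (X i)

/-- The rectangle of aspect ratio `r` admits a *diverse* tiling by rectangles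
with aspect ratios `X 0, …, X (n-1)`: every tile has some ratio `X i`, and for
every `i` some tile has ratio `X i`. -/
def DiverselyTileable (r : ℝ) {n : ℕ} (X : Fin n → ℝ) : Prop :=
  ∃ T : RectTiling r, (∀ k, ∃ i, T.ratioOK k (X i)) ∧ (∀ i, ∃ k, T.ratioOK k (X i))

open Set

theorem Set.iUnion_fin_add {α : Type*} {m n : ℕ} (f : Fin (m + n) → Set α) :
    ⋃ k, f k = (⋃ k, f (Fin.castAdd n k)) ∪ ⋃ k, f (Fin.natAdd m k) := by
  ext x
  simp only [mem_iUnion, mem_union]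
  constructor
  · rintro ⟨k, hk⟩
    induction k using Fin.addCases with
    | left k => exact .inl ⟨k, hk⟩
    | right k => exact .inr ⟨k, hk⟩
  · rintro (⟨k, hk⟩ | ⟨k, hk⟩) <;> exact ⟨_, hk⟩

namespace RectTiling

variable {r r₁ r₂ : ℝ}

theorem tile_subset (T : RectTiling r) (k : Fin T.m) :
    Icc (T.px k) (T.px k + T.w k) ×ˢ Icc (T.py k) (T.py k + T.h k) ⊆ Icc 0 1 ×ˢ Icc 0 r :=
  T.cover ▸ subset_iUnion_of_subset k subset_rfl

theorem py_nonneg (T : RectTiling r) (k : Fin T.m) : 0 ≤ T.py k :=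
  (T.tile_subset k (a := (T.px k, T.py k))
    ⟨left_mem_Icc.2 (by linarith [T.w_pos k]), left_mem_Icc.2 (by linarith [T.h_pos k])⟩).2.1

theorem py_add_h_le (T : RectTiling r) (k : Fin T.m) : T.py k + T.h k ≤ r :=
  (T.tile_subset k (a := (T.px k + T.w k, T.py k + T.h k))
    ⟨right_mem_Icc.2 (by linarith [T.w_pos k]), right_mem_Icc.2 (by linarith [T.h_pos k])⟩).2.2

theorem iUnion_tiles_shift (T : RectTiling r) (c : ℝ) :
    ⋃ k, Icc (T.px k) (T.px k + T.w k) ×ˢ Icc (T.py k + c) (T.py k + c + T.h k) =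
      Icc 0 1 ×ˢ Icc c (r + c) := by
  have := congrArg (Prod.map id (· - c) ⁻¹' ·) T.cover
  simpa only [preimage_iUnion, preimage_prod_map_prod, preimage_id, preimage_sub_const_Icc,
    zero_add, add_right_comm _ c] using this.symm

def single (hr : 0 < r) : RectTiling r where
  m := 1
  px _ := 0
  py _ := 0
  w _ := 1
  h _ := r
  w_pos _ := one_pos
  h_pos _ := hr
  cover := by simp only [iUnion_const, zero_add]
  disj k l hkl := absurd (Subsingleton.elim k l) hkl

def stack (hr₁ : 0 ≤ r₁) (hr₂ : 0 ≤ r₂) (T₁ : RectTiling r₁) (T₂ : RectTiling r₂) :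
    RectTiling (r₁ + r₂) where
  m := T₁.m + T₂.m
  px := Fin.append T₁.px T₂.px
  py := Fin.append T₁.py fun k => T₂.py k + r₁
  w := Fin.append T₁.w T₂.w
  h := Fin.append T₁.h T₂.h
  w_pos := Fin.addCases (by simpa using T₁.w_pos) (by simpa using T₂.w_pos)
  h_pos := Fin.addCases (by simpa using T₁.h_pos) (by simpa using T₂.h_pos)
  cover := by
    rw [← Icc_union_Icc_eq_Icc hr₁ (le_add_of_nonneg_right hr₂), prod_union, T₁.cover,
      add_comm r₁, ← T₂.iUnion_tiles_shift, iUnion_fin_add]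
    simp only [Fin.append_left, Fin.append_right]
  disj k l hkl := by
    induction k using Fin.addCases <;> induction l using Fin.addCases <;>
      simp only [Fin.append_left, Fin.append_right, ne_eq, Fin.castAdd_inj, Fin.natAdd_inj,
        Set.disjoint_left, mem_prod, mem_Ioo] at hkl ⊢
    case left.left k l => exact Set.disjoint_left.1 (T₁.disj k l hkl)
    case left.right k l =>
      intro x hk hl
      linarith [T₁.py_add_h_le k, T₂.py_nonneg l]
    case right.left k l =>
      intro x hk hl
      linarith [T₁.py_add_h_le l, T₂.py_nonneg k]
    case right.right k l =>
      intro x hk hl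
      have := Set.disjoint_left.1 (T₂.disj k l hkl)
      refine @this (x.1, x.2 - r₁) ?_ ?_ <;>
        simp only [mem_prod, mem_Ioo] <;> constructor <;> constructor <;> linarith

noncomputable def transpose (hr : 0 < r) (T : RectTiling r) : RectTiling r⁻¹ where
  m := T.m
  px k := T.py k / r
  py k := T.px k / r
  w k := T.h k / r
  h k := T.w k / r
  w_pos k := div_pos (T.h_pos k) hr
  h_pos k := div_pos (T.w_pos k) hr
  cover := by
    have := congrArg (fun S => Prod.swap ⁻¹' (Prod.map (· * r) (· * r) ⁻¹' S)) T.cover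
    simpa only [preimage_iUnion, preimage_prod_map_prod, preimage_mul_const_Icc₀ _ _ hr,
      preimage_swap_prod, zero_div, div_self hr.ne', one_div, add_div] using this
  disj k l hkl := by
    have := ((T.disj k l hkl).preimage (Prod.map (· * r) (· * r))).preimage Prod.swap
    simpa only [preimage_prod_map_prod, preimage_mul_const_Ioo₀ _ _ hr, preimage_swap_prod,
      add_div] using this

def ratios (T : RectTiling r) : Set ℝ :=
  range fun k => T.h k / T.w k

theorem ratios_single (hr : 0 < r) : (single hr).ratios = {r} := by
  simp [ratios, single]

theorem ratios_stack (hr₁ : 0 ≤ r₁) (hr₂ : 0 ≤ r₂) (T₁ : RectTiling r₁) (T₂ : RectTiling r₂) :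
    (stack hr₁ hr₂ T₁ T₂).ratios = T₁.ratios ∪ T₂.ratios := by
  simp only [ratios, ← iUnion_singleton_eq_range]
  exact (iUnion_fin_add (m := T₁.m) (n := T₂.m) _).trans
    (by simp only [stack, Fin.append_left, Fin.append_right])

theorem ratios_transpose (hr : 0 < r) (T : RectTiling r) :
    (T.transpose hr).ratios = T.ratios⁻¹ := by
  simp only [ratios, inv_range, inv_div, transpose, div_div_div_cancel_right₀ hr.ne']

theorem exists_nat_mul (hr : 0 ≤ r) (T : RectTiling r) {m : ℕ} (hm : m ≠ 0) :
    ∃ T' : RectTiling (m * r), T'.ratios = T.ratios := by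
  induction m, Nat.one_le_iff_ne_zero.2 hm using Nat.le_induction with
  | base => rw [Nat.cast_one, one_mul]; exact ⟨T, rfl⟩
  | succ m hm ih =>
    obtain ⟨T', hT'⟩ := ih (by omega)
    rw [Nat.cast_succ, add_one_mul]
    exact ⟨stack (by positivity) hr T' T, by rw [ratios_stack, hT', union_self]⟩

theorem exists_rat_mul {x : ℝ} (hx : 0 < x) {q : ℚ} (hq : 0 < q) :
    ∃ T : RectTiling (q * x), T.ratios = {x} := by
  have hM : q.num.natAbs ≠ 0 := Int.natAbs_ne_zero.2 (Rat.num_ne_zero.2 hq.ne')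
  have hMx : 0 < (q.num.natAbs : ℝ) * x := by positivity
  obtain ⟨T₁, h₁⟩ := (single hx).exists_nat_mul hx.le hM
  obtain ⟨T₂, h₂⟩ := (T₁.transpose hMx).exists_nat_mul (inv_nonneg.2 hMx.le) q.den_ne_zero
  have hKMx : 0 < (q.den : ℝ) * ((q.num.natAbs : ℝ) * x)⁻¹ := by positivity
  have hqx : (q : ℝ) * x = ((q.den : ℝ) * ((q.num.natAbs : ℝ) * x)⁻¹)⁻¹ := by
    rw [Rat.cast_def, Nat.cast_natAbs, Int.cast_abs,
      abs_of_pos (Int.cast_pos.2 (Rat.num_pos.2 hq))]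
    field_simp
  rw [hqx]
  exact ⟨T₂.transpose hKMx, by
    rw [ratios_transpose, h₂, ratios_transpose, h₁, inv_inv, ratios_single]⟩

theorem exists_sum {ι : Type*} {s : Finset ι} (hs : s.Nonempty) {d : ι → ℝ}
    (hd : ∀ i ∈ s, 0 ≤ d i) (T : ∀ i, RectTiling (d i)) :
    ∃ T' : RectTiling (∑ i ∈ s, d i), T'.ratios = ⋃ i ∈ s, (T i).ratios := by
  induction hs using Finset.Nonempty.cons_induction with
  | singleton i => rw [Finset.sum_singleton]; exact ⟨T i, by simp⟩
  | cons i s hi hs ih =>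
    simp only [Finset.mem_cons, forall_eq_or_imp] at hd
    obtain ⟨T', hT'⟩ := ih hd.2
    rw [Finset.sum_cons]
    refine ⟨stack hd.1 (Finset.sum_nonneg hd.2) (T i) T', ?_⟩
    rw [ratios_stack, hT']
    simp only [Finset.mem_cons, iUnion_iUnion_eq_or_left]

theorem exists_sum_rat_mul {ι : Type*} [Fintype ι] [Nonempty ι] {x : ι → ℝ}
    (hx : ∀ i, 0 < x i) {q : ι → ℚ} (hq : ∀ i, 0 < q i) :
    ∃ T : RectTiling (∑ i, q i * x i), T.ratios = range x := by
  choose T hT using fun i => exists_rat_mul (hx i) (hq i)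
  obtain ⟨T', h⟩ := exists_sum Finset.univ_nonempty
    (fun i _ => (mul_pos (Rat.cast_pos.2 (hq i)) (hx i)).le) T
  exact ⟨T', by simp only [h, hT, Finset.mem_univ, iUnion_true, iUnion_singleton_eq_range]⟩

theorem diverselyTileable_of_ratios {n : ℕ} {X : Fin n → ℝ} (T : RectTiling r)
    (hsub : T.ratios ⊆ range X ∪ (range X)⁻¹) (hsup : range X ⊆ T.ratios) :
    DiverselyTileable r X := by
  refine ⟨T, fun k => ?_, fun i => ?_⟩
  · rcases hsub (mem_range_self k) with ⟨i, hi⟩ | ⟨i, hi⟩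
    · exact ⟨i, .inl hi.symm⟩
    · exact ⟨i, .inr (by rw [hi, inv_div])⟩
  · obtain ⟨k, hk⟩ := hsup (mem_range_self i)
    exact ⟨k, .inl hk⟩

end RectTiling

open Filter Topology

theorem exists_pos_add_sub_eq {a b e f : ℚ} (ha : 0 < a) (h : |f| * a < |b| * e) :
    ∃ u t : ℚ, 0 < u ∧ 0 < t ∧ u * a + t * a = e ∧ u * b - t * b = f := by
  have hb : b ≠ 0 := by
    rintro rfl
    simp only [abs_zero, zero_mul] at h
    exact h.not_ge (by positivity)
  have he : 0 < e := pos_of_mul_pos_right ((mul_nonneg (abs_nonneg f) ha.le).trans_lt h)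
    (abs_nonneg b)
  have hfb : |f / b| < e / a := by
    rwa [abs_div, div_lt_div_iff₀ (abs_pos.2 hb) ha, mul_comm e]
  obtain ⟨hlo, hhi⟩ := abs_lt.1 hfb
  refine ⟨(e / a + f / b) / 2, (e / a - f / b) / 2, by linarith, by linarith, ?_, ?_⟩ <;>
    field_simp <;> ring

theorem exists_pos_sum_add_conj_eq {ι : Type*} [Fintype ι] [DecidableEq ι] (a b : ι → ℚ) {j : ι}
    (ha : 0 < a j) {e f : ℚ} (h : |f| * a j < |b j| * e) (s : ℝ) :
    ∃ q : ι → ℚ, (∀ i, 0 < q i) ∧ ∃ t : ℚ, 0 < t ∧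
      (e + f * s : ℝ) = ∑ i, q i * (a i + b i * s) + t * (a j - b j * s) := by
  have hsmall : ∀ᶠ ε in 𝓝 (0 : ℚ),
      |f - ε * ∑ i, b i| * a j < |b j| * (e - ε * ∑ i, a i) :=
    ContinuousAt.eventually_lt (by fun_prop) (by fun_prop) (by simpa using h)
  obtain ⟨ε, hε, hεpos⟩ := ((hsmall.filter_mono nhdsWithin_le_nhds).and
    (self_mem_nhdsWithin (s := Ioi (0 : ℚ)) (a := 0))).exists
  obtain ⟨u, t, hu, ht, hua, htb⟩ := exists_pos_add_sub_eq ha hε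
  set q : ι → ℚ := fun i => ε + if i = j then u else 0
  have hq : ∀ c : ι → ℚ, ∑ i, q i * c i = ε * ∑ i, c i + u * c j := fun c => by
    simp [q, add_mul, Finset.sum_add_distrib, Finset.mul_sum]
  refine ⟨q, fun i => ?_, t, ht, ?_⟩
  · simp only [q]
    split_ifs <;> linarith
  · have hsplit : ∑ i, (q i : ℝ) * (a i + b i * s) =
        ((∑ i, q i * a i : ℚ) : ℝ) + ((∑ i, q i * b i : ℚ) : ℝ) * s := by
      push_cast
      simp only [mul_add, Finset.sum_add_distrib, Finset.sum_mul, mul_assoc]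
    have hae : e = ε * ∑ i, a i + u * a j + t * a j := by linarith
    have hbf : f = ε * ∑ i, b i + u * b j - t * b j := by linarith
    rw [hsplit, hq, hq, hae, hbf]
    push_cast
    ring

theorem exists_rat_conj_eq_mul_inv {p a b : ℚ} (hp : 0 ≤ p) (hx : 0 < (a : ℝ) + b * √p)
    (hc : 0 < (a : ℝ) - b * √p) :
    ∃ N : ℚ, 0 < N ∧ (a : ℝ) - b * √p = N * ((a : ℝ) + b * √p)⁻¹ := by
  have hN : ((a ^ 2 - b ^ 2 * p : ℚ) : ℝ) = (a + b * √p) * (a - b * √p) := by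
    push_cast
    ring_nf
    rw [Real.sq_sqrt (by exact_mod_cast hp)]
  refine ⟨a ^ 2 - b ^ 2 * p, by exact_mod_cast hN ▸ mul_pos hx hc, ?_⟩
  rw [hN]
  field_simp

open RectTiling in
theorem diverse_tiling_exists_pos_conj_case (p : ℚ) (hp : 0 < p)
    (n : ℕ) (hn : 2 ≤ n) (a b : Fin n → ℚ) (X : Fin n → ℝ)
    (hX : ∀ i, X i = (a i : ℝ) + (b i : ℝ) * Real.sqrt p)
    (hXpos : ∀ i, 0 < X i)
    (hconj : ∀ i, 0 < (a i : ℝ) - (b i : ℝ) * Real.sqrt p)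
    (e f : ℚ) (z : ℝ) (hz : z = (e : ℝ) + (f : ℝ) * Real.sqrt p)
    (he : 0 < e)
    (hf : |f| / e < Finset.univ.sup' ⟨⟨0, by omega⟩, Finset.mem_univ _⟩
        (fun i => |b i| / a i)) :
    DiverselyTileable z X := by
  have : Nonempty (Fin n) := ⟨⟨0, by omega⟩⟩
  obtain ⟨j, -, hj⟩ := (Finset.lt_sup'_iff _).1 hf
  have ha : 0 < a j := by
    have := hXpos j
    rw [hX] at this
    exact_mod_cast (by linarith [hconj j] : (0 : ℝ) < a j)
  obtain ⟨q, hq, t, ht, hzq⟩ := exists_pos_sum_add_conj_eq a b ha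
    ((div_lt_div_iff₀ he ha).1 hj) (√p)
  obtain ⟨N, hN, hconjN⟩ := exists_rat_conj_eq_mul_inv hp.le (hX j ▸ hXpos j) (hconj j)
  have hz' : z = ∑ i, (q i : ℝ) * X i + ((t * N : ℚ) : ℝ) * (X j)⁻¹ := by
    simp only [hz, hzq, hconjN, hX, Rat.cast_mul, mul_assoc]
  obtain ⟨T₁, h₁⟩ := exists_sum_rat_mul hXpos hq
  obtain ⟨T₂, h₂⟩ := exists_rat_mul (inv_pos.2 (hXpos j)) (mul_pos ht hN)
  have hT₁ : 0 ≤ ∑ i, (q i : ℝ) * X i :=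
    Finset.sum_nonneg fun i _ => (mul_pos (Rat.cast_pos.2 (hq i)) (hXpos i)).le
  have hT₂ : 0 ≤ ((t * N : ℚ) : ℝ) * (X j)⁻¹ :=
    (mul_pos (Rat.cast_pos.2 (mul_pos ht hN)) (inv_pos.2 (hXpos j))).le
  rw [hz']
  refine diverselyTileable_of_ratios (stack hT₁ hT₂ T₁ T₂) ?_ ?_ <;> rw [ratios_stack, h₁, h₂]
  · exact union_subset_union_right _ (singleton_subset_iff.2 (inv_mem_inv.2 (mem_range_self j)))
  · exact subset_union_left
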